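/- Let p = n^{-α} with α > 5/6 fixed, and G ~ G(n,p). Then there exists u = u(n,p) such that almost surely (with probability tending to 1 as n → ∞), u ≤ χ(G) ≤ u + 3. -/

import Mathlib

open MeasureTheory

noncomputable def bernoulliMeasure (p : ℝ) : Measure Bool :=
  ENNReal.ofReal p • Measure.dirac true + ENNReal.ofReal (1 - p) • Measure.dirac false

/-- The Erdős–Rényi measure `G(n,p)` on edge indicator functions. -/
noncomputable def gnp (n : ℕ) (p : ℝ) : Measure (Sym2 (Fin n) → Bool) :=
  Measure.pi fun _ => bernoulliMeasure p

def graphOf {n : ℕ} (ω : Sym2 (Fin n) → Bool) : SimpleGraph (Fin n) :=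
  SimpleGraph.fromRel fun u v => ω s(u, v) = true

/-!
Let `Y` be the least number of vertices whose deletion leaves a `u`-colourable graph. Exposing
`G(n,p)` one vertex at a time changes `Y` by at most one per step, so `Var Y ≤ n`. Take `u` to be
the least `k` for which `G` is `k`-colourable with probability above `η = 4n/t²`: then `Y = 0`
has probability above `η`, which by Chebyshev forces `E Y < t/2`, hence `Y < t` except with
probability at most `η`; and `χ < u` also has probability at most `η`.

For `p = n^{-α}` with `α > 5/6` and `t = ⌈n^{α - 1/3}⌉`, a first-moment count shows that a.a.s.
every set of `s ≤ t` vertices spans fewer than `3s/2` edges, so every such set has a vertex of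
degree at most two inside it and is greedily `3`-colourable. Colouring the `Y < t` deleted
vertices with three fresh colours gives `χ ≤ u + 3`.
-/

open Finset Real
open scoped ProbabilityTheory Nat

namespace ProbabilityTheory

section Finite

variable {Ω : Type*} [MeasurableSpace Ω] [Finite Ω] [MeasurableSingletonClass Ω]
  {μ : Measure Ω} [IsProbabilityMeasure μ]

lemma integral_sub_sq_eq_variance_add (X : Ω → ℝ) (c : ℝ) :
    ∫ ω, (X ω - c) ^ 2 ∂μ = Var[X; μ] + (μ[X] - c) ^ 2 := by
  have hexpand : ∀ ω, (X ω - c) ^ 2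
      = (X ω - μ[X]) ^ 2 + (2 * (μ[X] - c) * (X ω - μ[X]) + (μ[X] - c) ^ 2) := by
    intro ω; ring
  simp_rw [hexpand]
  rw [integral_add .of_finite .of_finite, integral_add .of_finite .of_finite, integral_const_mul,
    integral_sub .of_finite .of_finite, variance_eq_integral (measurable_of_finite X).aemeasurable]
  simp

lemma variance_le_one_of_forall_abs_sub_le_one {X : Ω → ℝ} (hX : ∀ ω ω', |X ω - X ω'| ≤ 1) :
    Var[X; μ] ≤ 1 := by
  obtain ⟨ω₀⟩ : Nonempty Ω := nonempty_of_isProbabilityMeasure μ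
  calc Var[X; μ] ≤ (((X ω₀ + 1) - (X ω₀ - 1)) / 2) ^ 2 :=
        variance_le_sq_of_bounded (.of_forall fun ω => by
          have := abs_le.1 (hX ω ω₀); constructor <;> linarith)
          (measurable_of_finite X).aemeasurable
    _ = 1 := by ring

/-- The hypothesis forces `μ[Y] < c`, so the tail `2c ≤ Y` lies inside the Chebyshev deviation
event `c ≤ |Y - μ[Y]|`. -/
lemma measureReal_two_mul_le_le_variance_div_sq {Y : Ω → ℝ} {c : ℝ} (hc : 0 < c)
    (h : Var[Y; μ] / c ^ 2 < μ.real {ω | Y ω ≤ 0}) :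
    μ.real {ω | 2 * c ≤ Y ω} ≤ Var[Y; μ] / c ^ 2 := by
  have hcheb : μ.real {ω | c ≤ |Y ω - μ[Y]|} ≤ Var[Y; μ] / c ^ 2 :=
    ENNReal.toReal_le_of_le_ofReal (div_nonneg (variance_nonneg _ _) (sq_nonneg c))
      (meas_ge_le_variance_div_sq .of_discrete hc)
  have hmean : μ[Y] < c := by
    by_contra! hmean
    refine (h.trans_le (measureReal_mono (fun ω hω => ?_) (measure_ne_top _ _))).not_ge hcheb
    simp only [Set.mem_ofPred_eq] at hω ⊢
    rw [abs_sub_comm]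
    exact le_abs.2 (Or.inl (by linarith))
  refine (measureReal_mono (fun ω hω => ?_) (measure_ne_top _ _)).trans hcheb
  simp only [Set.mem_ofPred_eq] at hω ⊢
  exact le_abs.2 (Or.inl (by linarith))

end Finite

lemma variance_prod {α β : Type*} [MeasurableSpace α] [Finite α] [MeasurableSingletonClass α]
    [MeasurableSpace β] [Finite β] [MeasurableSingletonClass β]
    (μ : Measure α) (ν : Measure β) [IsProbabilityMeasure μ] [IsProbabilityMeasure ν]
    (F : α × β → ℝ) :
    Var[F; μ.prod ν] = ∫ a, Var[fun b => F (a, b); ν] ∂μ + Var[fun a => ∫ b, F (a, b) ∂ν; μ] := by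
  have hmean : (μ.prod ν)[F] = ∫ a, ∫ b, F (a, b) ∂ν ∂μ := integral_prod F .of_finite
  rw [variance_eq_integral (measurable_of_finite F).aemeasurable, integral_prod _ .of_finite,
    variance_eq_integral (measurable_of_finite _).aemeasurable,
    ← integral_add .of_finite .of_finite]
  refine integral_congr_ae (.of_forall fun a => ?_)
  simp only
  rw [integral_sub_sq_eq_variance_add, hmean]

theorem variance_pi_le_card_of_blockwise_lipschitz {ι κ : Type*} [Fintype ι] {β : ι → Type*}
    [∀ i, Fintype (β i)] [∀ i, MeasurableSpace (β i)] [∀ i, MeasurableSingletonClass (β i)]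
    (ν : ∀ i, Measure (β i)) [∀ i, IsProbabilityMeasure (ν i)] (b : ι → κ) (K : Finset κ)
    (hb : ∀ i, b i ∈ K) (f : (∀ i, β i) → ℝ)
    (hf : ∀ j x y, (∀ i, b i ≠ j → x i = y i) → |f x - f y| ≤ 1) :
    Var[f; Measure.pi ν] ≤ #K := by
  classical
  induction K using Finset.induction_on generalizing ι with
  | empty =>
    have : IsEmpty ι := ⟨fun i => by simpa using hb i⟩
    obtain ⟨x⟩ : Nonempty (∀ i, β i) := inferInstance
    have hconst : f = fun _ => f x := funext fun y => congrArg f (Subsingleton.elim y x)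
    rw [hconst, variance_eq_integral aemeasurable_const]
    simp
  | insert j K hj ih =>
    -- Split off block `j`: the law of total variance bounds `Var f` by the mean variance in the
    -- other blocks (induction) plus the variance of the conditional mean given block `j` (≤ 1).
    have hmp := measurePreserving_piEquivPiSubtypeProd ν (fun i => b i = j)
    set e := MeasurableEquiv.piEquivPiSubtypeProd β (fun i => b i = j)
    set F := fun z => f (e.symm z)
    have hvar := hmp.variance_fun_comp (measurable_of_finite F).aemeasurable
    simp only [F, e.symm_apply_apply] at hvar
    rw [hvar, variance_prod, card_insert_of_notMem hj, Nat.cast_add_one]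
    gcongr ?_ + ?_
    · have hslice : ∀ a, Var[fun y => F (a, y); Measure.pi fun i => ν i] ≤ #K := fun a =>
        ih (ι := {i // ¬ b i = j}) (fun i => ν i) (fun i => b i)
          (fun i => (mem_insert.1 (hb i)).resolve_left i.2) _
          fun j' y y' hyy' => hf j' _ _ fun i hi => by
            by_cases hij : b i = j
            · simp [e, hij]
            · simpa [e, hij] using hyy' ⟨i, hij⟩ hi
      calc _ ≤ ∫ _, (#K : ℝ) ∂(Measure.pi fun i : {i // b i = j} => ν i) :=
            integral_mono .of_finite .of_finite hslice
        _ = #K := by simp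
    · refine variance_le_one_of_forall_abs_sub_le_one fun a a' => ?_
      rw [← integral_sub .of_finite .of_finite]
      have hdiff : ∀ y, ‖F (a, y) - F (a', y)‖ ≤ 1 := fun y =>
        hf j _ _ fun i hi => by simp [e, hi]
      simpa using norm_integral_le_of_norm_le_const
        (μ := Measure.pi fun i : {i // ¬ b i = j} => ν i) (.of_forall hdiff)

end ProbabilityTheory

namespace SimpleGraph

variable {V : Type*} (G : SimpleGraph V)

lemma induce_colorable_iff {s : Set V} {n : ℕ} :
    (G.induce s).Colorable n ↔
      ∃ f : V → ℕ, (∀ v ∈ s, f v < n) ∧ ∀ v ∈ s, ∀ w ∈ s, G.Adj v w → f v ≠ f w := by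
  classical
  rw [colorable_iff_exists_bdd_nat_coloring]
  constructor
  · rintro ⟨C, hC⟩
    refine ⟨fun v => if h : v ∈ s then C ⟨v, h⟩ else 0, fun v hv => by simpa [hv] using hC ⟨v, hv⟩,
      fun v hv w hw hvw => ?_⟩
    simpa [hv, hw] using C.valid (show (G.induce s).Adj ⟨v, hv⟩ ⟨w, hw⟩ from hvw)
  · rintro ⟨f, hfn, hf⟩
    exact ⟨Coloring.mk (fun v => f v) fun {v w} hvw => hf v v.2 w w.2 hvw, fun v => hfn v v.2⟩

variable {G} in
lemma Colorable.induce {n : ℕ} (h : G.Colorable n) (s : Set V) : (G.induce s).Colorable n :=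
  h.of_hom (Embedding.induce s).toHom

variable {G} in
lemma colorable_add_of_induce_compl {s : Set V} {m k : ℕ} (hc : (G.induce sᶜ).Colorable m)
    (hs : (G.induce s).Colorable k) : G.Colorable (m + k) := by
  classical
  obtain ⟨f, hfm, hf⟩ := (G.induce_colorable_iff).1 hc
  obtain ⟨g, hgk, hg⟩ := (G.induce_colorable_iff).1 hs
  rw [colorable_iff_exists_bdd_nat_coloring]
  refine ⟨Coloring.mk (fun v => if v ∈ s then m + g v else f v) fun {v w} hvw => ?_, fun v => ?_⟩
  · by_cases hv : v ∈ s <;> by_cases hw : w ∈ s <;> simp only [hv, hw, if_true, if_false]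
    · exact fun h => hg v hv w hw hvw (by omega)
    · have := hfm w hw; omega
    · have := hfm v hv; omega
    · exact hf v hv w hw hvw
  · change (if v ∈ s then m + g v else f v) < m + k
    by_cases hv : v ∈ s <;> simp only [hv, if_true, if_false]
    · have := hgk v hv; omega
    · have := hfm v hv; omega

lemma induce_colorable_of_forall_exists_card_adj_le [DecidableEq V] [DecidableRel G.Adj]
    (d : ℕ) (S : Finset V) (hS : ∀ T ⊆ S, T.Nonempty → ∃ v ∈ T, #{w ∈ T | G.Adj v w} ≤ d) :
    (G.induce ↑S).Colorable (d + 1) := by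
  induction S using Finset.strongInduction with
  | _ S ih =>
  obtain rfl | hne := S.eq_empty_or_nonempty
  · exact (G.induce_colorable_iff).2 ⟨fun _ => 0, by simp, by simp⟩
  obtain ⟨v, hv, hdeg⟩ := hS S Subset.rfl hne
  obtain ⟨f, hfd, hf⟩ := (G.induce_colorable_iff).1 <| ih _ (erase_ssubset hv)
    fun T hT => hS T (hT.trans (erase_subset v S))
  have hfree : ((range (d + 1)) \ ({w ∈ S | G.Adj v w}.image f)).Nonempty := by
    rw [← card_pos]
    have := le_card_sdiff ({w ∈ S | G.Adj v w}.image f) (range (d + 1))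
    have := card_image_le (s := {w ∈ S | G.Adj v w}) (f := f)
    simp only [card_range] at *
    omega
  obtain ⟨c, hc⟩ := hfree
  simp only [mem_sdiff, mem_range, mem_image, mem_filter, not_exists, not_and] at hc
  refine (G.induce_colorable_iff).2 ⟨Function.update f v c, fun w hw => ?_, fun a ha b hb hab => ?_⟩
  · rcases eq_or_ne w v with rfl | hwv
    · simpa using hc.1
    · simpa [hwv] using hfd w (by simpa [hwv] using hw)
  · rcases eq_or_ne a v with rfl | hav
    · simpa [hab.ne.symm] using fun h => hc.2 b ⟨hb, hab⟩ h.symm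
    rcases eq_or_ne b v with rfl | hbv
    · simpa [hav] using hc.2 a ⟨ha, hab.symm⟩
    · simpa [hav, hbv] using hf a (by simpa [hav] using ha) b (by simpa [hbv] using hb) hab

section Degrees

variable [DecidableEq V] [DecidableRel G.Adj]

lemma sum_card_adj_eq_two_mul_card_edges (T : Finset V) :
    ∑ v ∈ T, #{w ∈ T | G.Adj v w} = 2 * #{e ∈ T.sym2 | e ∈ G.edgeSet} := by
  set E := {e ∈ T.sym2 | e ∈ G.edgeSet}
  have hleft : ∀ v ∈ T, #{w ∈ T | G.Adj v w} = #{e ∈ E | v ∈ e} := by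
    intro v hv
    rw [← card_image_of_injective _ (Sym2.mkEmbedding v).injective]
    congr 1
    ext e
    simp only [E, mem_image, mem_filter, Sym2.mkEmbedding_apply]
    constructor
    · rintro ⟨w, ⟨hw, hvw⟩, rfl⟩
      exact ⟨⟨mk_mem_sym2_iff.2 ⟨hv, hw⟩, hvw⟩, Sym2.mem_mk_left v w⟩
    · rintro ⟨⟨he, hadj⟩, hve⟩
      refine ⟨Sym2.Mem.other hve, ⟨mem_sym2_iff.1 he _ (Sym2.other_mem hve), ?_⟩,
        Sym2.other_spec hve⟩
      rwa [← mem_edgeSet, Sym2.other_spec hve]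
  have hright : ∀ e ∈ E, #{v ∈ T | v ∈ e} = 2 := by
    intro e he
    induction e using Sym2.ind with
    | _ a b =>
    simp only [E, mem_filter, mk_mem_sym2_iff, mem_edgeSet] at he
    rw [show {v ∈ T | v ∈ s(a, b)} = {a, b} by ext; simp; grind, card_pair he.2.ne]
  have hcount := sum_card_bipartiteAbove_eq_sum_card_bipartiteBelow (s := T) (t := E)
    (r := fun v e => v ∈ e)
  simp only [bipartiteAbove, bipartiteBelow] at hcount
  rw [sum_congr rfl hleft, hcount, sum_congr rfl hright, sum_const, smul_eq_mul, mul_comm]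

lemma exists_card_adj_le_of_card_edges_lt {T : Finset V} {d : ℕ}
    (h : 2 * #{e ∈ T.sym2 | e ∈ G.edgeSet} < (d + 1) * #T) :
    ∃ v ∈ T, #{w ∈ T | G.Adj v w} ≤ d := by
  by_contra! hdeg
  have : (d + 1) * #T ≤ ∑ v ∈ T, #{w ∈ T | G.Adj v w} := by
    simpa [mul_comm] using card_nsmul_le_sum T _ (d + 1) fun v hv => hdeg v hv
  rw [sum_card_adj_eq_two_mul_card_edges] at this
  omega

end Degrees

section DeletionNumber

noncomputable def deletionNumber (u : ℕ) : ℕ :=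
  sInf {k | ∃ S : Finset V, #S = k ∧ (G.induce (↑S)ᶜ).Colorable u}

variable {G}

lemma exists_card_eq_deletionNumber [Fintype V] (u : ℕ) :
    ∃ S : Finset V, #S = G.deletionNumber u ∧ (G.induce (↑S)ᶜ).Colorable u := by
  have hne : {k | ∃ S : Finset V, #S = k ∧ (G.induce (↑S)ᶜ).Colorable u}.Nonempty :=
    ⟨_, univ, rfl, (G.induce_colorable_iff).2 ⟨fun _ => 0, by simp, by simp⟩⟩
  exact Nat.sInf_mem hne

lemma deletionNumber_le_card {u : ℕ} {S : Finset V} (h : (G.induce (↑S)ᶜ).Colorable u) :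
    G.deletionNumber u ≤ #S :=
  Nat.sInf_le ⟨S, rfl, h⟩

lemma Colorable.deletionNumber_eq_zero {u : ℕ} (h : G.Colorable u) : G.deletionNumber u = 0 :=
  Nat.le_zero.1 <| (deletionNumber_le_card (S := ∅) (h.induce _)).trans_eq card_empty

lemma deletionNumber_le_add_one [Fintype V] {G' : SimpleGraph V} (u : ℕ) (v : V)
    (h : ∀ a b, a ≠ v → b ≠ v → G.Adj a b → G'.Adj a b) :
    G.deletionNumber u ≤ G'.deletionNumber u + 1 := by
  classical
  obtain ⟨S, hS, hcol⟩ := exists_card_eq_deletionNumber (G := G') u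
  let incl : G.induce (↑(insert v S))ᶜ →g G'.induce (↑S)ᶜ :=
    { toFun x := ⟨x.1, fun hx => x.2 (mem_insert_of_mem hx)⟩
      map_rel' := fun {x y} hxy => h x y (fun hx => x.2 (by simp [hx]))
        (fun hy => y.2 (by simp [hy])) hxy }
  calc G.deletionNumber u ≤ #(insert v S) := deletionNumber_le_card (hcol.of_hom incl)
    _ ≤ #S + 1 := card_insert_le v S
    _ = _ := by rw [hS]

end DeletionNumber

lemma toNat_chromaticNumber_le_iff {V : Type*} [Finite V] (G : SimpleGraph V) (k : ℕ) :
    G.chromaticNumber.toNat ≤ k ↔ G.Colorable k := by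
  rw [← chromaticNumber_le_iff_colorable]
  obtain ⟨m, hm⟩ := ENat.ne_top_iff_exists.1 <|
    chromaticNumber_ne_top_iff_exists.2 ⟨_, G.colorable_chromaticNumber_of_fintype⟩
  rw [← hm]
  simp

section Dense

variable [DecidableEq V] [DecidableRel G.Adj]

def HasSmallDenseSet (t : ℕ) : Prop :=
  ∃ T : Finset V, T.Nonempty ∧ #T ≤ t ∧ 3 * #T ≤ 2 * #{e ∈ T.sym2 | e ∈ G.edgeSet}

variable {G}

lemma induce_colorable_three_of_not_hasSmallDenseSet {t : ℕ} (h : ¬ G.HasSmallDenseSet t)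
    {S : Finset V} (hS : #S ≤ t) : (G.induce ↑S).Colorable 3 :=
  G.induce_colorable_of_forall_exists_card_adj_le 2 S fun T hTS hT =>
    G.exists_card_adj_le_of_card_edges_lt <| by
      by_contra! hdense
      exact h ⟨T, hT, (card_le_card hTS).trans hS, by omega⟩

lemma colorable_add_three_of_deletionNumber_le [Fintype V] {t u : ℕ}
    (h : ¬ G.HasSmallDenseSet t) (hY : G.deletionNumber u ≤ t) : G.Colorable (u + 3) := by
  obtain ⟨S, hS, hcol⟩ := exists_card_eq_deletionNumber (G := G) u
  exact colorable_add_of_induce_compl hcol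
    (induce_colorable_three_of_not_hasSmallDenseSet h (hS.trans_le hY))

end Dense

end SimpleGraph

section Threshold

variable {Ω V : Type*} [MeasurableSpace Ω] [Fintype V] (μ : Measure Ω) (G : Ω → SimpleGraph V)

noncomputable def colorabilityThreshold (η : ℝ) : ℕ :=
  sInf {k | η < μ.real {ω | (G ω).Colorable k}}

variable {μ G}

lemma lt_measureReal_colorable_colorabilityThreshold [IsProbabilityMeasure μ] {η : ℝ}
    (hη : η < 1) : η < μ.real {ω | (G ω).Colorable (colorabilityThreshold μ G η)} :=
  Nat.sInf_mem (s := {k | η < μ.real {ω | (G ω).Colorable k}})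
    ⟨Fintype.card V, by simpa [SimpleGraph.colorable_of_fintype] using hη⟩

lemma measureReal_chromaticNumber_lt_colorabilityThreshold_le {η : ℝ} (hη : 0 ≤ η) :
    μ.real {ω | (G ω).chromaticNumber.toNat < colorabilityThreshold μ G η} ≤ η := by
  set u := colorabilityThreshold μ G η
  rcases Nat.eq_zero_or_pos u with hu | hu
  · simpa [hu] using hη
  have hbelow := Nat.notMem_of_lt_sInf (s := {k | η < μ.real {ω | (G ω).Colorable k}})
    (Nat.sub_one_lt_of_lt hu)
  have hevent : {ω | (G ω).chromaticNumber.toNat < u} = {ω | (G ω).Colorable (u - 1)} := by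
    ext ω
    rw [Set.mem_ofPred_eq, Set.mem_ofPred_eq, ← SimpleGraph.toNat_chromaticNumber_le_iff]
    omega
  rw [hevent]
  exact le_of_not_gt hbelow

end Threshold

lemma Nat.choose_le_exp_one_mul_div_pow (N k : ℕ) : (N.choose k : ℝ) ≤ (exp 1 * N / k) ^ k := by
  rcases Nat.eq_zero_or_pos k with rfl | hk
  · simp
  calc (N.choose k : ℝ) ≤ N ^ k / k ! := Nat.choose_le_pow_div k N
    _ = (N / k) ^ k * ((k : ℝ) ^ k / k !) := by rw [div_pow]; field_simp
    _ ≤ (N / k) ^ k * exp 1 ^ k := by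
        rw [exp_one_pow]; gcongr; exact pow_div_factorial_le_exp _ (by positivity) k
    _ = (exp 1 * N / k) ^ k := by ring

lemma choose_mul_choose_sym2_mul_pow_le {n s t : ℕ} {p ρ : ℝ} (hp : 0 ≤ p) (hs : 1 ≤ s)
    (hst : s ≤ t) (htp : exp 1 * t * p ≤ 1) (hρ : exp 1 ^ 5 * n ^ 2 * t * p ^ 3 ≤ ρ) :
    n.choose s * ((s + 1).choose 2).choose ((3 * s + 1) / 2) * p ^ ((3 * s + 1) / 2) ≤ √ρ ^ s := by
  set m := (3 * s + 1) / 2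
  have hm : 3 * s ≤ 2 * m := by omega
  have hm0 : (0 : ℝ) < m := by exact_mod_cast (show 0 < m by omega)
  set q := exp 1 * s * p
  have hq0 : 0 ≤ q := by positivity
  have hq1 : q ≤ 1 := le_trans (by gcongr : exp 1 * s * p ≤ exp 1 * t * p) htp
  have hpairs : exp 1 * ((s + 1).choose 2 : ℕ) * p / m ≤ q := by
    rw [Nat.cast_choose_two, div_le_iff₀ hm0]
    have : ((s : ℝ) + 1) ≤ 2 * m := by exact_mod_cast (show s + 1 ≤ 2 * m by omega)
    push_cast
    have := mul_le_mul_of_nonneg_left this (by positivity : 0 ≤ exp 1 * s * p)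
    nlinarith
  set A := (exp 1 * n / s) ^ s * q ^ m
  have hA : n.choose s * ((s + 1).choose 2).choose m * p ^ m ≤ A := by
    rw [mul_assoc]
    refine mul_le_mul (Nat.choose_le_exp_one_mul_div_pow n s) ?_ (by positivity) (by positivity)
    calc _ ≤ (exp 1 * ((s + 1).choose 2 : ℕ) / m) ^ m * p ^ m := by
          gcongr; exact Nat.choose_le_exp_one_mul_div_pow _ m
      _ = (exp 1 * ((s + 1).choose 2 : ℕ) * p / m) ^ m := by rw [← mul_pow]; ring
      _ ≤ q ^ m := by gcongr
  -- squaring clears the half-integral exponent coming from `2m ≥ 3s`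
  have hA2 : A ^ 2 ≤ ρ ^ s := by
    calc A ^ 2 = (exp 1 * n / s) ^ (2 * s) * q ^ (2 * m) := by ring
      _ ≤ (exp 1 * n / s) ^ (2 * s) * q ^ (3 * s) := by
          exact mul_le_mul_of_nonneg_left (pow_le_pow_of_le_one hq0 hq1 hm) (by positivity)
      _ = (exp 1 ^ 5 * n ^ 2 * s * p ^ 3) ^ s := by
          rw [pow_mul, pow_mul, ← mul_pow]; congr 1; field_simp; ring
      _ ≤ ρ ^ s := pow_le_pow_left₀ (by positivity) (le_trans (by gcongr) hρ) s
  calc _ ≤ A := hA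
    _ ≤ √ρ ^ s := by
      refine (pow_le_pow_iff_left₀ (by positivity) (by positivity) two_ne_zero).1 ?_
      rw [← pow_mul, mul_comm, pow_mul, sq_sqrt (le_trans (by positivity) hρ)]
      exact hA2

lemma sum_choose_mul_choose_sym2_mul_pow_le {n t : ℕ} {p ρ : ℝ} (hp : 0 ≤ p)
    (htp : exp 1 * t * p ≤ 1) (hρ : exp 1 ^ 5 * n ^ 2 * t * p ^ 3 ≤ ρ) (hρ' : ρ ≤ 1 / 4) :
    ∑ s ∈ Icc 1 t, n.choose s * ((s + 1).choose 2).choose ((3 * s + 1) / 2) *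
      p ^ ((3 * s + 1) / 2) ≤ 2 * √ρ := by
  have hr : √ρ ≤ 1 / 2 := sqrt_le_iff.2 ⟨by norm_num, by linarith⟩
  calc _ ≤ ∑ s ∈ Ico 1 (t + 1), √ρ ^ s := by
        rw [Ico_add_one_right_eq_Icc]
        exact sum_le_sum fun s hs => choose_mul_choose_sym2_mul_pow_le hp (mem_Icc.1 hs).1
          (mem_Icc.1 hs).2 htp hρ
    _ ≤ √ρ ^ 1 / (1 - √ρ) := geom_sum_Ico_le_of_lt_one (sqrt_nonneg ρ) (by linarith)
    _ ≤ 2 * √ρ := by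
        rw [pow_one, div_le_iff₀ (by linarith)]
        nlinarith [sqrt_nonneg ρ]

lemma bernoulliMeasure_singleton_true (p : ℝ) : bernoulliMeasure p {true} = ENNReal.ofReal p := by
  simp [bernoulliMeasure]

lemma isProbabilityMeasure_bernoulliMeasure {p : ℝ} (hp₀ : 0 ≤ p) (hp₁ : p ≤ 1) :
    IsProbabilityMeasure (bernoulliMeasure p) :=
  ⟨by simp [bernoulliMeasure, ← ENNReal.ofReal_add hp₀ (sub_nonneg.2 hp₁)]⟩

lemma isProbabilityMeasure_gnp {n : ℕ} {p : ℝ} (hp₀ : 0 ≤ p) (hp₁ : p ≤ 1) :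
    IsProbabilityMeasure (gnp n p) :=
  have := isProbabilityMeasure_bernoulliMeasure hp₀ hp₁
  inferInstanceAs (IsProbabilityMeasure (Measure.pi _))

lemma gnp_real_forall_mem_eq_true {n : ℕ} {p : ℝ} (hp₀ : 0 ≤ p) (hp₁ : p ≤ 1)
    (F : Finset (Sym2 (Fin n))) : (gnp n p).real {ω | ∀ e ∈ F, ω e = true} = p ^ #F := by
  classical
  have := isProbabilityMeasure_bernoulliMeasure hp₀ hp₁
  have hpi : {ω : Sym2 (Fin n) → Bool | ∀ e ∈ F, ω e = true} =
      Set.univ.pi fun e => if e ∈ F then {true} else Set.univ := by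
    ext ω; simp only [Set.mem_pi, Set.mem_univ, true_implies]
    exact forall_congr' fun e => by split_ifs <;> simp [*]
  rw [measureReal_def, hpi, gnp, Measure.pi_pi]
  simp only [apply_ite, bernoulliMeasure_singleton_true, measure_univ]
  rw [prod_ite_mem, univ_inter, prod_const, ENNReal.toReal_pow, ENNReal.toReal_ofReal hp₀]

lemma graphOf_adj {n : ℕ} (ω : Sym2 (Fin n) → Bool) (a b : Fin n) :
    (graphOf ω).Adj a b ↔ a ≠ b ∧ ω s(a, b) = true := by
  simp [graphOf, Sym2.eq_swap]

instance {n : ℕ} (ω : Sym2 (Fin n) → Bool) : DecidableRel (graphOf ω).Adj :=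
  fun a b => decidable_of_iff _ (graphOf_adj ω a b).symm

lemma gnp_real_hasSmallDenseSet_le {n : ℕ} {p : ℝ} (hp₀ : 0 ≤ p) (hp₁ : p ≤ 1) (t : ℕ) :
    (gnp n p).real {ω | (graphOf ω).HasSmallDenseSet t} ≤
      ∑ s ∈ Icc 1 t, n.choose s * ((s + 1).choose 2).choose ((3 * s + 1) / 2) *
        p ^ ((3 * s + 1) / 2) := by
  have := isProbabilityMeasure_gnp (n := n) hp₀ hp₁
  have hsub : {ω | (graphOf ω).HasSmallDenseSet t} ⊆
      ⋃ s ∈ Icc 1 t, ⋃ T ∈ powersetCard s (univ : Finset (Fin n)),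
        ⋃ F ∈ powersetCard ((3 * s + 1) / 2) T.sym2, {ω | ∀ e ∈ F, ω e = true} := by
    rintro ω ⟨T, hT, hTt, hdense⟩
    obtain ⟨F, hFE, hF⟩ := exists_subset_card_eq (s := {e ∈ T.sym2 | e ∈ (graphOf ω).edgeSet})
      (n := (3 * #T + 1) / 2) (by omega)
    simp only [Set.mem_iUnion, mem_Icc, mem_powersetCard, subset_univ, true_and]
    refine ⟨#T, ⟨hT.card_pos, hTt⟩, T, rfl, F, ⟨fun e he => (mem_filter.1 (hFE he)).1, hF⟩,
      fun e he => ?_⟩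
    have hedge := (mem_filter.1 (hFE he)).2
    induction e using Sym2.ind with
    | _ a b => exact ((graphOf_adj ω a b).1 hedge).2
  calc _ ≤ _ := measureReal_mono hsub (measure_ne_top _ _)
    _ ≤ ∑ s ∈ Icc 1 t, ∑ T ∈ powersetCard s (univ : Finset (Fin n)),
          ∑ F ∈ powersetCard ((3 * s + 1) / 2) T.sym2,
            (gnp n p).real {ω | ∀ e ∈ F, ω e = true} := by
        refine (measureReal_biUnion_finset_le _ _).trans (sum_le_sum fun s _ => ?_)
        refine (measureReal_biUnion_finset_le _ _).trans (sum_le_sum fun T _ => ?_)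
        exact measureReal_biUnion_finset_le _ _
    _ = _ := by
        refine sum_congr rfl fun s _ => ?_
        rw [sum_congr rfl fun T hT => sum_congr rfl fun F hF => by
          rw [gnp_real_forall_mem_eq_true hp₀ hp₁, (mem_powersetCard.1 hF).2]]
        simp only [sum_const, card_powersetCard, card_sym2, nsmul_eq_mul]
        rw [sum_congr rfl fun T hT => by rw [(mem_powersetCard.1 hT).2]]
        simp [mul_assoc]

lemma graphOf_adj_of_eq_on_sup_ne {n : ℕ} {ω ω' : Sym2 (Fin n) → Bool} {v : Fin n}
    (h : ∀ e : Sym2 (Fin n), e.sup ≠ v → ω e = ω' e) {a b : Fin n} (ha : a ≠ v) (hb : b ≠ v)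
    (hab : (graphOf ω).Adj a b) : (graphOf ω').Adj a b := by
  rw [graphOf_adj] at hab ⊢
  refine ⟨hab.1, h s(a, b) ?_ ▸ hab.2⟩
  rw [Sym2.sup_mk]
  rcases max_choice a b with hmax | hmax <;> rw [hmax] <;> assumption

/-- Vertex exposure: the edges whose larger endpoint is `v` form the `v`-th block. -/
lemma variance_deletionNumber_gnp_le {n : ℕ} {p : ℝ} (hp₀ : 0 ≤ p) (hp₁ : p ≤ 1) (u : ℕ) :
    Var[fun ω => ((graphOf ω).deletionNumber u : ℝ); gnp n p] ≤ n := by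
  have := isProbabilityMeasure_bernoulliMeasure hp₀ hp₁
  have hlip : ∀ (v : Fin n) (ω ω' : Sym2 (Fin n) → Bool), (∀ e, e.sup ≠ v → ω e = ω' e) →
      ((graphOf ω).deletionNumber u : ℝ) ≤ (graphOf ω').deletionNumber u + 1 := fun v ω ω' h => by
    exact_mod_cast SimpleGraph.deletionNumber_le_add_one u v fun a b ha hb =>
      graphOf_adj_of_eq_on_sup_ne h ha hb
  rw [gnp]
  simpa using ProbabilityTheory.variance_pi_le_card_of_blockwise_lipschitz
    (fun _ => bernoulliMeasure p) Sym2.sup univ (fun _ => mem_univ _)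
    (fun ω => ((graphOf ω).deletionNumber u : ℝ)) fun v ω ω' h =>
      abs_sub_le_iff.2 ⟨by linarith [hlip v ω ω' h],
        by linarith [hlip v ω' ω fun e he => (h e he).symm]⟩

theorem one_sub_le_gnp_real_chromaticNumber_le_add_three {n : ℕ} {p : ℝ} (hp₀ : 0 ≤ p) (hp₁ : p ≤ 1)
    {t u : ℕ} (ht : 0 < t)
    (hu : 4 * n / t ^ 2 < (gnp n p).real {ω | (graphOf ω).Colorable u})
    (hu' : (gnp n p).real {ω | (graphOf ω).chromaticNumber.toNat < u} ≤ 4 * n / t ^ 2) :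
    1 - 2 * (4 * n / t ^ 2) - (gnp n p).real {ω | (graphOf ω).HasSmallDenseSet t} ≤
      (gnp n p).real {ω | u ≤ (graphOf ω).chromaticNumber.toNat ∧
        (graphOf ω).chromaticNumber.toNat ≤ u + 3} := by
  have := isProbabilityMeasure_gnp (n := n) hp₀ hp₁
  set μ := gnp n p
  set Y := fun ω : Sym2 (Fin n) → Bool => ((graphOf ω).deletionNumber u : ℝ)
  have ht' : (0 : ℝ) < t / 2 := by positivity
  have hvar : Var[Y; μ] / (t / 2) ^ 2 ≤ 4 * n / t ^ 2 := by
    calc _ ≤ n / (t / 2 : ℝ) ^ 2 := by gcongr; exact variance_deletionNumber_gnp_le hp₀ hp₁ u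
      _ = 4 * n / t ^ 2 := by ring
  have hzero : μ.real {ω | (graphOf ω).Colorable u} ≤ μ.real {ω | Y ω ≤ 0} :=
    measureReal_mono (fun ω hω => by simp [Y, SimpleGraph.Colorable.deletionNumber_eq_zero hω])
  have htail : μ.real {ω | (t : ℝ) ≤ Y ω} ≤ 4 * n / t ^ 2 := by
    have := ProbabilityTheory.measureReal_two_mul_le_le_variance_div_sq ht'
      (hvar.trans_lt (hu.trans_le hzero))
    rw [mul_div_cancel₀ _ two_ne_zero] at this
    exact this.trans hvar
  set A := {ω | (graphOf ω).chromaticNumber.toNat < u}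
  set B := {ω | (t : ℝ) ≤ Y ω}
  set C := {ω | (graphOf ω).HasSmallDenseSet t}
  have hcover : {ω | u ≤ (graphOf ω).chromaticNumber.toNat ∧
      (graphOf ω).chromaticNumber.toNat ≤ u + 3}ᶜ ⊆ A ∪ B ∪ C := by
    intro ω hω
    by_contra hgood
    simp only [A, B, C, Y, Set.mem_union, Set.mem_ofPred_eq, not_or, not_lt, not_le] at hgood
    refine hω ⟨hgood.1.1, (SimpleGraph.toNat_chromaticNumber_le_iff _ _).2 ?_⟩
    exact SimpleGraph.colorable_add_three_of_deletionNumber_le hgood.2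
      (by exact_mod_cast hgood.1.2.le)
  have hcompl := measureReal_mono (μ := μ) hcover (measure_ne_top _ _)
  rw [probReal_compl_eq_one_sub (.of_discrete)] at hcompl
  linarith [measureReal_union_le (μ := μ) (A ∪ B) C, measureReal_union_le (μ := μ) A B]

section Asymptotics

open Filter Topology

lemma natCast_rpow_neg_le_one {α : ℝ} (hα : 0 ≤ α) (n : ℕ) : (n : ℝ) ^ (-α) ≤ 1 := by
  rcases Nat.eq_zero_or_pos n with rfl | hn
  · rcases hα.eq_or_lt with rfl | hα
    · simp
    · simp [zero_rpow (neg_ne_zero.2 hα.ne')]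
  · exact rpow_le_one_of_one_le_of_nonpos (by exact_mod_cast hn) (by linarith)

lemma tendsto_natCast_rpow_neg_atTop {a : ℝ} (ha : 0 < a) :
    Tendsto (fun n : ℕ => (n : ℝ) ^ (-a)) atTop (𝓝 0) :=
  (tendsto_rpow_neg_atTop ha).comp tendsto_natCast_atTop_atTop

lemma le_natCeil_rpow_le_two_mul {x γ : ℝ} (hx : 1 ≤ x) (hγ : 0 ≤ γ) :
    x ^ γ ≤ ⌈x ^ γ⌉₊ ∧ (⌈x ^ γ⌉₊ : ℝ) ≤ 2 * x ^ γ := by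
  have h1 : 1 ≤ x ^ γ := one_le_rpow hx hγ
  exact ⟨Nat.le_ceil _, by linarith [Nat.ceil_lt_add_one (zero_le_one.trans h1)]⟩

variable {α x : ℝ}

lemma four_mul_div_natCeil_rpow_sq_le (hα : 1 / 3 ≤ α) (hx : 1 ≤ x) :
    4 * x / ⌈x ^ (α - 1 / 3)⌉₊ ^ 2 ≤ 4 * x ^ (-(2 * α - 5 / 3)) := by
  have hx0 : 0 < x := by linarith
  have ht := (le_natCeil_rpow_le_two_mul hx (by linarith : 0 ≤ α - 1 / 3)).1
  have hsq : (x ^ (α - 1 / 3)) ^ 2 * x ^ (-(2 * α - 5 / 3)) = x := by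
    rw [← rpow_natCast, ← rpow_mul hx0.le, ← rpow_add hx0]
    convert rpow_one x using 2
    push_cast; ring
  rw [div_le_iff₀ (by positivity)]
  calc 4 * x = 4 * ((x ^ (α - 1 / 3)) ^ 2 * x ^ (-(2 * α - 5 / 3))) := by rw [hsq]
    _ = 4 * x ^ (-(2 * α - 5 / 3)) * (x ^ (α - 1 / 3)) ^ 2 := by ring
    _ ≤ _ := by gcongr

lemma exp_one_mul_natCeil_rpow_mul_rpow_neg_le (hα : 1 / 3 ≤ α) (hx : 1 ≤ x) :
    exp 1 * ⌈x ^ (α - 1 / 3)⌉₊ * x ^ (-α) ≤ 2 * exp 1 * x ^ (-(1 / 3 : ℝ)) := by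
  have hx0 : 0 < x := by linarith
  have ht := (le_natCeil_rpow_le_two_mul hx (by linarith : 0 ≤ α - 1 / 3)).2
  calc _ ≤ exp 1 * (2 * x ^ (α - 1 / 3)) * x ^ (-α) := by gcongr
    _ = 2 * exp 1 * x ^ (-(1 / 3 : ℝ)) := by
        rw [mul_assoc (exp 1), mul_assoc 2, mul_assoc, ← rpow_add hx0]; ring_nf

lemma exp_one_pow_mul_sq_mul_natCeil_rpow_mul_rpow_neg_pow_le (hα : 1 / 3 ≤ α)
    (hx : 1 ≤ x) :
    exp 1 ^ 5 * x ^ 2 * ⌈x ^ (α - 1 / 3)⌉₊ * (x ^ (-α)) ^ 3 ≤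
      2 * exp 1 ^ 5 * x ^ (-(2 * α - 5 / 3)) := by
  have hx0 : 0 < x := by linarith
  have ht := (le_natCeil_rpow_le_two_mul hx (by linarith : 0 ≤ α - 1 / 3)).2
  have hexp : x ^ 2 * x ^ (α - 1 / 3) * (x ^ (-α)) ^ 3 = x ^ (-(2 * α - 5 / 3)) := by
    rw [← rpow_natCast, ← rpow_natCast (x ^ (-α)), ← rpow_mul hx0.le, ← rpow_add hx0,
      ← rpow_add hx0]
    norm_num
    ring_nf
  calc _ ≤ exp 1 ^ 5 * x ^ 2 * (2 * x ^ (α - 1 / 3)) * (x ^ (-α)) ^ 3 := by gcongr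
    _ = 2 * exp 1 ^ 5 * (x ^ 2 * x ^ (α - 1 / 3) * (x ^ (-α)) ^ 3) := by ring
    _ = _ := by rw [hexp]

lemma tendsto_four_mul_div_natCeil_rpow_sq (hα : 5 / 6 < α) :
    Tendsto (fun n : ℕ => 4 * (n : ℝ) / ⌈(n : ℝ) ^ (α - 1 / 3)⌉₊ ^ 2) atTop (𝓝 0) := by
  refine squeeze_zero' (.of_forall fun n => by positivity) ?_
    (by simpa only [mul_zero] using
      (tendsto_natCast_rpow_neg_atTop (by linarith : 0 < 2 * α - 5 / 3)).const_mul 4)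
  filter_upwards [eventually_ge_atTop 1] with n hn
  exact four_mul_div_natCeil_rpow_sq_le (α := α) (by linarith) (by exact_mod_cast hn)

lemma tendsto_gnp_real_hasSmallDenseSet (hα : 5 / 6 < α) :
    Tendsto (fun n : ℕ => (gnp n ((n : ℝ) ^ (-α))).real
      {ω | (graphOf ω).HasSmallDenseSet ⌈(n : ℝ) ^ (α - 1 / 3)⌉₊}) atTop (𝓝 0) := by
  have hρ : Tendsto (fun n : ℕ => 2 * exp 1 ^ 5 * (n : ℝ) ^ (-(2 * α - 5 / 3))) atTop (𝓝 0) := by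
    simpa only [mul_zero] using
      (tendsto_natCast_rpow_neg_atTop (by linarith : 0 < 2 * α - 5 / 3)).const_mul (2 * exp 1 ^ 5)
  have htp : Tendsto (fun n : ℕ => 2 * exp 1 * (n : ℝ) ^ (-(1 / 3 : ℝ))) atTop (𝓝 0) := by
    simpa only [mul_zero] using
      (tendsto_natCast_rpow_neg_atTop (by norm_num : (0 : ℝ) < 1 / 3)).const_mul (2 * exp 1)
  refine squeeze_zero' (.of_forall fun n => measureReal_nonneg) ?_
    (by simpa only [Function.comp_def, sqrt_zero, mul_zero] using
      ((continuous_sqrt.tendsto 0).comp hρ).const_mul 2)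
  filter_upwards [eventually_ge_atTop 1,
    hρ.eventually (ge_mem_nhds (by norm_num : (0 : ℝ) < 1 / 4)),
    htp.eventually (ge_mem_nhds one_pos)] with n hn hρn htpn
  have hn' : (1 : ℝ) ≤ n := by exact_mod_cast hn
  have hp₀ : 0 ≤ (n : ℝ) ^ (-α) := by positivity
  have hα' : 1 / 3 ≤ α := by linarith
  refine (gnp_real_hasSmallDenseSet_le hp₀ (natCast_rpow_neg_le_one (by linarith) n) _).trans ?_
  exact sum_choose_mul_choose_sym2_mul_pow_le hp₀
    ((exp_one_mul_natCeil_rpow_mul_rpow_neg_le hα' hn').trans htpn)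
    (exp_one_pow_mul_sq_mul_natCeil_rpow_mul_rpow_neg_pow_le hα' hn') hρn

end Asymptotics

/-- **Four-point concentration of the chromatic number**: for `p = n^{-α}` with `α > 5/6`
fixed, there is `u = u(n,p)` such that almost surely `u ≤ χ(G(n,p)) ≤ u + 3`. -/
theorem chromatic_four_point_concentration (α : ℝ) (hα : 5 / 6 < α) :
    ∃ u : ℕ → ℕ,
      Filter.Tendsto
        (fun n : ℕ => gnp n ((n : ℝ) ^ (-α))
          {ω | u n ≤ (graphOf ω).chromaticNumber.toNat ∧
            (graphOf ω).chromaticNumber.toNat ≤ u n + 3})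
        Filter.atTop (nhds 1) := by
  set μ : ∀ n : ℕ, Measure (Sym2 (Fin n) → Bool) := fun n => gnp n ((n : ℝ) ^ (-α))
  have hp₀ (n : ℕ) : 0 ≤ (n : ℝ) ^ (-α) := by positivity
  have hp₁ (n : ℕ) : (n : ℝ) ^ (-α) ≤ 1 := natCast_rpow_neg_le_one (by linarith) n
  have (n : ℕ) : IsProbabilityMeasure (μ n) := isProbabilityMeasure_gnp (hp₀ n) (hp₁ n)
  set t : ℕ → ℕ := fun n => ⌈(n : ℝ) ^ (α - 1 / 3)⌉₊
  set η : ℕ → ℝ := fun n => 4 * n / t n ^ 2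
  set u : ℕ → ℕ := fun n => colorabilityThreshold (μ n) graphOf (η n)
  have hη : Filter.Tendsto η Filter.atTop (nhds 0) := tendsto_four_mul_div_natCeil_rpow_sq hα
  have hlower : ∀ᶠ n in Filter.atTop,
      1 - 2 * η n - (μ n).real {ω | (graphOf ω).HasSmallDenseSet (t n)} ≤ (μ n).real
        {ω | u n ≤ (graphOf ω).chromaticNumber.toNat ∧
          (graphOf ω).chromaticNumber.toNat ≤ u n + 3} := by
    filter_upwards [hη.eventually (gt_mem_nhds one_pos), Filter.eventually_gt_atTop 0] with n hη₁ hn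
    exact one_sub_le_gnp_real_chromaticNumber_le_add_three (hp₀ n) (hp₁ n)
      (Nat.ceil_pos.2 (by positivity))
      (lt_measureReal_colorable_colorabilityThreshold hη₁)
      (measureReal_chromaticNumber_lt_colorabilityThreshold_le (by positivity))
  have hreal := tendsto_of_tendsto_of_tendsto_of_le_of_le'
    (by simpa only [mul_zero, sub_zero] using
      (tendsto_const_nhds.sub (hη.const_mul 2)).sub (tendsto_gnp_real_hasSmallDenseSet hα))
    tendsto_const_nhds hlower (.of_forall fun n => measureReal_le_one)
  refine ⟨u, ENNReal.ofReal_one ▸ (ENNReal.tendsto_ofReal hreal).congr fun n => ?_⟩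
  exact ofReal_measureReal (measure_ne_top _ _)
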